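/- The doubly robust estimator is unbiased if the imputed errors are accurate: if for every ranked list π and every document d in π the error deviation δ_{π,d} = c_{π,d}Δ(c,π,d) − ĉ_{π,d}Δ(ĉ,π,d) equals zero, then E[ℓ_DR] equals the ideal loss (1/|Π|)∑_{π ∈ Π} ∑_{d : c_{π,d}=1} Δ(c,π,d). -/

import Mathlib

/-! When the imputed errors are exact, every inverse-propensity correction term vanishes, so the
doubly robust estimator does not depend on the observation outcome: it is the constant ideal loss,
and so is its expectation under a probability measure. -/

open MeasureTheory ProbabilityTheory Finset

theorem sum_mul_eq_sum_filter_eq_one {ι R : Type*} [NonAssocSemiring R] [DecidableEq R]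
    (s : Finset ι) {f g : ι → R} (hf : ∀ i ∈ s, f i = 0 ∨ f i = 1) :
    ∑ i ∈ s, f i * g i = ∑ i ∈ s with f i = 1, g i := by
  rw [sum_filter]
  refine sum_congr rfl fun i hi => ?_
  split_ifs with h1
  · rw [h1, one_mul]
  · rw [(hf i hi).resolve_right h1, zero_mul]

theorem sum_add_mul_sum_sub_div_eq {ι K : Type*} [DivisionRing K] (s : Finset ι)
    {a b w : ι → K} (x : K) (h : ∀ i ∈ s, a i - b i = 0) :
    ∑ i ∈ s, b i + x * ∑ i ∈ s, (a i - b i) / w i = ∑ i ∈ s, a i := by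
  have hcorr : ∑ i ∈ s, (a i - b i) / w i = 0 := sum_eq_zero fun i hi => by rw [h i hi, zero_div]
  rw [hcorr, mul_zero, add_zero]
  exact sum_congr rfl fun i hi => (sub_eq_zero.mp (h i hi)).symm

theorem dr_unbiased_accurate_imputation_general
    {Ω : Type*} [MeasureSpace Ω] [IsProbabilityMeasure (ℙ : Measure Ω)]
    {P : Type*} [Fintype P] {D : Type*}
    (Dset : P → Finset D)
    (c chat : P → D → ℝ)
    (hc : ∀ π d, c π d = 0 ∨ c π d = 1)
    (Δc Δchat : P → D → ℝ)
    (phat : P → D → ℝ)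
    (o : P → Ω → ℝ)
    (hδ : ∀ π, ∀ d ∈ Dset π, c π d * Δc π d - chat π d * Δchat π d = 0) :
    ∫ ω, (1 / (Fintype.card P : ℝ)) *
        ∑ π, ((∑ d ∈ Dset π, chat π d * Δchat π d)
          + o π ω * ∑ d ∈ Dset π,
              (c π d * Δc π d - chat π d * Δchat π d) / phat π d)
      = (1 / (Fintype.card P : ℝ)) *
          ∑ π, ∑ d ∈ (Dset π).filter (fun d => c π d = 1), Δc π d := by
  have hconst : ∀ ω, ∑ π, ((∑ d ∈ Dset π, chat π d * Δchat π d)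
      + o π ω * ∑ d ∈ Dset π, (c π d * Δc π d - chat π d * Δchat π d) / phat π d)
      = ∑ π, ∑ d ∈ (Dset π).filter (fun d => c π d = 1), Δc π d := fun ω =>
    sum_congr rfl fun π _ => by
      rw [sum_add_mul_sum_sub_div_eq _ _ (hδ π),
        sum_mul_eq_sum_filter_eq_one _ fun d _ => hc π d]
  simp only [hconst, integral_const, probReal_univ, one_smul]

/-- The doubly robust estimator is unbiased if the imputed errors
are accurate (δ_{π,d} = 0 for all π, d). -/
theorem dr_unbiased_accurate_imputation
    {Ω : Type*} [MeasureSpace Ω] [IsProbabilityMeasure (ℙ : Measure Ω)]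
    {P : Type*} [Fintype P] [Nonempty P] {D : Type*}
    (Dset : P → Finset D)
    (c chat : P → D → ℝ)
    (hc : ∀ π d, c π d = 0 ∨ c π d = 1) (hchat : ∀ π d, chat π d = 0 ∨ chat π d = 1)
    (Δc Δchat : P → D → ℝ)
    (p phat : P → D → ℝ)
    (hp : ∀ π d, 0 < p π d ∧ p π d ≤ 1) (hphat : ∀ π d, 0 < phat π d ∧ phat π d ≤ 1)
    (o : P → Ω → ℝ) (ho01 : ∀ π ω, o π ω = 0 ∨ o π ω = 1)
    (hoInt : ∀ π, Integrable (o π))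
    (hoE : ∀ π, ∀ d ∈ Dset π,
      ∫ ω, o π ω * ((c π d * Δc π d - chat π d * Δchat π d) / phat π d)
        = p π d * ((c π d * Δc π d - chat π d * Δchat π d) / phat π d))
    (hδ : ∀ π, ∀ d ∈ Dset π, c π d * Δc π d - chat π d * Δchat π d = 0) :
    ∫ ω, (1 / (Fintype.card P : ℝ)) *
        ∑ π, ((∑ d ∈ Dset π, chat π d * Δchat π d)
          + o π ω * ∑ d ∈ Dset π,
              (c π d * Δc π d - chat π d * Δchat π d) / phat π d)
      = (1 / (Fintype.card P : ℝ)) *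
          ∑ π, ∑ d ∈ (Dset π).filter (fun d => c π d = 1), Δc π d :=
  dr_unbiased_accurate_imputation_general Dset c chat hc Δc Δchat phat o hδ
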